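/- Let S ≤ M n be a submodule and let w ∈ (Fin n → Fin 4 → ZMod 2). Then w lies in the dual code Ĉ(S)^⊥ (i.e., ⟨w, c⟩ = 0 for all c ∈ Ĉ(S)) if and only if both: (i) every block of w has even parity, Σ_{i : Fin 4} w j i = 0 for all j; and (ii) the extracted pair vector u(w) ∈ M n, defined by u(w) j = (w j 0 + w j 2, w j 0 + w j 1), satisfies ω(u(w), s) = 0 for all s ∈ S. -/

import Mathlib

/-- Binary symplectic representation of `n`-qubit Pauli operators (up to phase). -/
abbrev M (n : ℕ) : Type := Fin n → ZMod 2 × ZMod 2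

/-- The symplectic form: two Paulis commute iff it vanishes. -/
def symp {n : ℕ} (u v : M n) : ZMod 2 :=
  ∑ j, ((u j).1 * (v j).2 + (u j).2 * (v j).1)

/-- The inner `[[4,2,2]]` encoding of one qubit-pair symplectic entry. -/
def Emap (p : ZMod 2 × ZMod 2) : Fin 4 → ZMod 2 := ![p.1 + p.2, p.1, p.2, 0]

/-- Blockwise `[[4,2,2]]` encoding. -/
def Ehat {n : ℕ} (v : M n) : Fin n → Fin 4 → ZMod 2 := fun j => Emap (v j)

/-- The indicator vector of block `j` (the inner `XXXX`/`ZZZZ` stabilizer). -/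
def beta {n : ℕ} (j : Fin n) : Fin n → Fin 4 → ZMod 2 :=
  fun j' _ => if j' = j then 1 else 0

/-- The concatenated binary code `Ĉ(S)`. -/
def Chat {n : ℕ} (S : Submodule (ZMod 2) (M n)) :
    Submodule (ZMod 2) (Fin n → Fin 4 → ZMod 2) :=
  Submodule.span (ZMod 2) (Set.range (beta (n := n)) ∪ Ehat '' (S : Set (M n)))

/-- The standard dot product on the concatenated space. -/
def dotB {n : ℕ} (w w' : Fin n → Fin 4 → ZMod 2) : ZMod 2 :=
  ∑ j, ∑ i, w j i * w' j i

/-- The pair vector extracted from an even-parity block vector. -/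
def uOf {n : ℕ} (w : Fin n → Fin 4 → ZMod 2) : M n :=
  fun j => (w j 0 + w j 2, w j 0 + w j 1)

lemma dot_beta {n : ℕ} (w : Fin n → Fin 4 → ZMod 2) (j : Fin n) :
    dotB w (beta j) = ∑ i, w j i := by
  simp [dotB, beta]


lemma dot_Ehat {n : ℕ} (w : Fin n → Fin 4 → ZMod 2) (s : M n) :
    dotB w (Ehat s) = symp (uOf w) s := by
  unfold dotB Ehat symp uOf
  refine Finset.sum_congr rfl fun j _ => ?_
  simp [Fin.sum_univ_four, Emap]
  ring

theorem stmt4 (n : ℕ) (S : Submodule (ZMod 2) (M n)) (w : Fin n → Fin 4 → ZMod 2) :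
    (∀ c ∈ Chat S, dotB w c = 0) ↔
      ((∀ j, ∑ i, w j i = 0) ∧ ∀ s ∈ S, symp (uOf w) s = 0) := by
  let f : (Fin n → Fin 4 → ZMod 2) →ₗ[ZMod 2] ZMod 2 :=
    { toFun := fun c => dotB w c
      map_add' := by intro x y; simp [dotB, mul_add, Finset.sum_add_distrib]
      map_smul' := by
        intro r x
        simp [dotB, Finset.mul_sum, mul_left_comm] }
  have h1 : (∀ c ∈ Chat S, dotB w c = 0) ↔ Chat S ≤ LinearMap.ker f := by
    constructor
    · intro h c hc; exact h c hc
    · intro h c hc; exact h hc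
  rw [h1, Chat, Submodule.span_le]
  rw [Set.union_subset_iff]
  constructor
  · rintro ⟨hb, he⟩
    constructor
    · intro j
      have := hb ⟨j, rfl⟩
      rw [← dot_beta]; exact this
    · intro s hs
      have := he ⟨s, hs, rfl⟩
      rw [← dot_Ehat]; exact this
  · rintro ⟨hb, hs⟩
    constructor
    · rintro _ ⟨j, rfl⟩
      exact (show dotB w (beta j) = 0 by simpa [f, dot_beta] using hb j)
    · rintro _ ⟨s, hmem, rfl⟩
      exact (show dotB w (Ehat s) = 0 by simpa [f, dot_Ehat] using hs s hmem)
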